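/- arXiv:2502.06383 — 5 statements merged into one kernel-verified Lean document; each statement's English description precedes it below -/
import Mathlib

section
/- For every λ ∈ K and all x, y ∈ g, the Lie bracket satisfies ⁅φ_λ(x), φ_λ(y)⁆ = λ · φ_λ(⁅x, y⁆). -/
/-! Declaring `u⁺`, `l`, `u⁻` to have degrees `0`, `1`, `2`, the bracket relations say that the
bracket of homogeneous elements of degrees `i` and `j` has degree `i + j - 1` (or vanishes), and
`φ_λ` acts on degree `d` as `λ ^ d`. Hence both sides of the identity scale a bracket of
homogeneous elements by `λ ^ (i + j)`; as both sides are bilinear in `(x, y)` and the three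
subspaces span `g`, this suffices. -/

theorem LinearMap.ext_on₂ {R M N : Type*} [CommSemiring R] [AddCommMonoid M] [Module R M]
    [AddCommMonoid N] [Module R N] {s : Set M} (hs : Submodule.span R s = ⊤)
    {B C : M →ₗ[R] M →ₗ[R] N} (h : ∀ x ∈ s, ∀ y ∈ s, B x y = C x y) : B = C :=
  LinearMap.ext_on hs fun x hx => LinearMap.ext_on hs fun y hy => h x hx y hy

theorem Submodule.span_union₃_eq_top {R M : Type*} [Semiring R] [AddCommMonoid M] [Module R M]
    {A B C : Submodule R M} (h : ∀ x, ∃ a ∈ A, ∃ b ∈ B, ∃ c ∈ C, x = a + b + c) :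
    span R (A ∪ B ∪ C : Set M) = ⊤ := by
  rw [span_union, span_union, span_eq, span_eq, span_eq, eq_top_iff]
  rintro x -
  obtain ⟨a, ha, b, hb, c, hc, rfl⟩ := h x
  exact add_mem_sup (add_mem_sup ha hb) hc

section LieAlgebra

variable {R L : Type*} [CommRing R] [LieRing L] [LieAlgebra R L]

theorem lie_mem_of_lie_swap_mem {S : Submodule R L} {x y : L} (h : ⁅y, x⁆ ∈ S) : ⁅x, y⁆ ∈ S := by
  rw [← lie_skew]
  exact neg_mem h

theorem lie_map_eq_smul_map_lie {ψ : L →ₗ[R] L} {x y : L} {r s t u : R} (hx : ψ x = s • x)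
    (hy : ψ y = t • y) (hxy : ψ ⁅x, y⁆ = u • ⁅x, y⁆) (hstu : s * t = r * u) :
    ⁅ψ x, ψ y⁆ = r • ψ ⁅x, y⁆ := by
  rw [hx, hy, hxy, smul_lie, lie_smul, smul_smul, smul_smul, hstu]

theorem lie_map_eq_smul_map_lie_of_mem_union {uPlus ell uMinus : Submodule R L}
    (hPP : ∀ x ∈ uPlus, ∀ y ∈ uPlus, ⁅x, y⁆ = (0 : L))
    (hMM : ∀ x ∈ uMinus, ∀ y ∈ uMinus, ⁅x, y⁆ = (0 : L))
    (hll : ∀ x ∈ ell, ∀ y ∈ ell, ⁅x, y⁆ ∈ ell)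
    (hlP : ∀ x ∈ ell, ∀ y ∈ uPlus, ⁅x, y⁆ ∈ uPlus)
    (hlM : ∀ x ∈ ell, ∀ y ∈ uMinus, ⁅x, y⁆ ∈ uMinus)
    (hPM : ∀ x ∈ uPlus, ∀ y ∈ uMinus, ⁅x, y⁆ ∈ ell)
    {ψ : L →ₗ[R] L} {r : R} (hψP : ∀ a ∈ uPlus, ψ a = a) (hψL : ∀ b ∈ ell, ψ b = r • b)
    (hψM : ∀ c ∈ uMinus, ψ c = r ^ 2 • c) :
    ∀ x ∈ (uPlus ∪ ell ∪ uMinus : Set L), ∀ y ∈ (uPlus ∪ ell ∪ uMinus : Set L),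
      ⁅ψ x, ψ y⁆ = r • ψ ⁅x, y⁆ := by
  have hψP' : ∀ a ∈ uPlus, ψ a = (1 : R) • a := fun a ha => by rw [one_smul, hψP a ha]
  rintro x ((hx | hx) | hx) y ((hy | hy) | hy)
  · rw [hψP x hx, hψP y hy, hPP x hx y hy, map_zero, smul_zero]
  · exact lie_map_eq_smul_map_lie (hψP' x hx) (hψL y hy)
      (hψP' _ (lie_mem_of_lie_swap_mem (hlP y hy x hx))) (by ring)
  · exact lie_map_eq_smul_map_lie (hψP' x hx) (hψM y hy) (hψL _ (hPM x hx y hy)) (by ring)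
  · exact lie_map_eq_smul_map_lie (hψL x hx) (hψP' y hy) (hψP' _ (hlP x hx y hy)) (by ring)
  · exact lie_map_eq_smul_map_lie (hψL x hx) (hψL y hy) (hψL _ (hll x hx y hy)) rfl
  · exact lie_map_eq_smul_map_lie (hψL x hx) (hψM y hy) (hψM _ (hlM x hx y hy)) rfl
  · exact lie_map_eq_smul_map_lie (hψM x hx) (hψP' y hy)
      (hψL _ (lie_mem_of_lie_swap_mem (hPM y hy x hx))) (by ring)
  · exact lie_map_eq_smul_map_lie (hψM x hx) (hψL y hy)
      (hψM _ (lie_mem_of_lie_swap_mem (hlM y hy x hx))) (by ring)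
  · exact lie_map_eq_smul_map_lie (u := r ^ 3) (hψM x hx) (hψM y hy)
      (by rw [hMM x hx y hy, map_zero, smul_zero]) (by ring)

end LieAlgebra

theorem stmt_0_general (K : Type*) [Field K]
    (g : Type*) [LieRing g] [LieAlgebra K g]
    (uPlus ell uMinus : Submodule K g)
    (hdec : ∀ x : g, ∃! t : uPlus × ell × uMinus, x = ↑t.1 + ↑t.2.1 + ↑t.2.2)
    (hPP : ∀ x ∈ uPlus, ∀ y ∈ uPlus, ⁅x, y⁆ = (0 : g))
    (hMM : ∀ x ∈ uMinus, ∀ y ∈ uMinus, ⁅x, y⁆ = (0 : g))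
    (hll : ∀ x ∈ ell, ∀ y ∈ ell, ⁅x, y⁆ ∈ ell)
    (hlP : ∀ x ∈ ell, ∀ y ∈ uPlus, ⁅x, y⁆ ∈ uPlus)
    (hlM : ∀ x ∈ ell, ∀ y ∈ uMinus, ⁅x, y⁆ ∈ uMinus)
    (hPM : ∀ x ∈ uPlus, ∀ y ∈ uMinus, ⁅x, y⁆ ∈ ell)
    (φ : K → g →ₗ[K] g)
    (hφ : ∀ (lam : K), ∀ a ∈ uPlus, ∀ b ∈ ell, ∀ c ∈ uMinus,
      φ lam (a + b + c) = a + lam • b + lam ^ 2 • c) :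
    ∀ (lam : K) (x y : g), ⁅φ lam x, φ lam y⁆ = lam • φ lam ⁅x, y⁆ := by
  intro lam x y
  have hspan : Submodule.span K (uPlus ∪ ell ∪ uMinus : Set g) = ⊤ :=
    Submodule.span_union₃_eq_top fun x => by
      obtain ⟨⟨a, b, c⟩, hx, -⟩ := hdec x
      exact ⟨a, a.2, b, b.2, c, c.2, hx⟩
  have hφP : ∀ a ∈ uPlus, φ lam a = a := fun a ha => by
    simpa using hφ lam a ha 0 ell.zero_mem 0 uMinus.zero_mem
  have hφL : ∀ b ∈ ell, φ lam b = lam • b := fun b hb => by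
    simpa using hφ lam 0 uPlus.zero_mem b hb 0 uMinus.zero_mem
  have hφM : ∀ c ∈ uMinus, φ lam c = lam ^ 2 • c := fun c hc => by
    simpa using hφ lam 0 uPlus.zero_mem 0 ell.zero_mem c hc
  let bracket : g →ₗ[K] g →ₗ[K] g := LieModule.toEnd K g g
  have hbilin : bracket.compl₁₂ (φ lam) (φ lam) = lam • bracket.compr₂ (φ lam) :=
    LinearMap.ext_on₂ hspan <| lie_map_eq_smul_map_lie_of_mem_union hPP hMM hll hlP hlM hPM
      hφP hφL hφM
  simpa [bracket] using LinearMap.congr_fun₂ hbilin x y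

/-- Lemma 4.2(1): for every `λ ∈ K` and all `x, y ∈ g`,
`⁅φ_λ(x), φ_λ(y)⁆ = λ • φ_λ(⁅x, y⁆)`. -/
theorem stmt_0 (K : Type*) [Field K] [CharZero K]
    (g : Type*) [LieRing g] [LieAlgebra K g]
    (uPlus ell uMinus : Submodule K g)
    (hdec : ∀ x : g, ∃! t : uPlus × ell × uMinus, x = ↑t.1 + ↑t.2.1 + ↑t.2.2)
    (hPP : ∀ x ∈ uPlus, ∀ y ∈ uPlus, ⁅x, y⁆ = (0 : g))
    (hMM : ∀ x ∈ uMinus, ∀ y ∈ uMinus, ⁅x, y⁆ = (0 : g))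
    (hll : ∀ x ∈ ell, ∀ y ∈ ell, ⁅x, y⁆ ∈ ell)
    (hlP : ∀ x ∈ ell, ∀ y ∈ uPlus, ⁅x, y⁆ ∈ uPlus)
    (hlM : ∀ x ∈ ell, ∀ y ∈ uMinus, ⁅x, y⁆ ∈ uMinus)
    (hPM : ∀ x ∈ uPlus, ∀ y ∈ uMinus, ⁅x, y⁆ ∈ ell)
    (φ : K → g →ₗ[K] g)
    (hφ : ∀ (lam : K), ∀ a ∈ uPlus, ∀ b ∈ ell, ∀ c ∈ uMinus,
      φ lam (a + b + c) = a + lam • b + lam ^ 2 • c) :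
    ∀ (lam : K) (x y : g), ⁅φ lam x, φ lam y⁆ = lam • φ lam ⁅x, y⁆ :=
  stmt_0_general K g uPlus ell uMinus hdec hPP hMM hll hlP hlM hPM φ hφ
end

section
/- For every nonzero λ ∈ K and all v, x, y ∈ g, the Killing form satisfies κ(φ_λ(v), ⁅φ_λ(x), φ_λ(y)⁆) = λ³ · κ(v, ⁅x, y⁆). -/
/-!
Put `u⁺, l, u⁻` in degrees `-1, 0, 1`; the bracket relations say that degrees add. The map
`θ_λ = λ⁻¹ • φ_λ` multiplies degree `d` by `λ^d`, hence preserves brackets, and it is invertible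
with inverse `θ_{λ⁻¹}`, so it is a Lie algebra automorphism. The Killing form is invariant under
automorphisms, and writing `φ_λ = λ • θ_λ` in each of the three arguments of `κ(v, ⁅x, y⁆)`
produces the factor `λ³`.
-/

section

variable {K g : Type*} [Field K] [LieRing g] [LieAlgebra K g]

structure IsShortGrading (uPlus ell uMinus : Submodule K g) : Prop where
  lie_uPlus_uPlus : ∀ x ∈ uPlus, ∀ y ∈ uPlus, ⁅x, y⁆ = (0 : g)
  lie_uMinus_uMinus : ∀ x ∈ uMinus, ∀ y ∈ uMinus, ⁅x, y⁆ = (0 : g)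
  lie_ell_ell : ∀ x ∈ ell, ∀ y ∈ ell, ⁅x, y⁆ ∈ ell
  lie_ell_uPlus : ∀ x ∈ ell, ∀ y ∈ uPlus, ⁅x, y⁆ ∈ uPlus
  lie_ell_uMinus : ∀ x ∈ ell, ∀ y ∈ uMinus, ⁅x, y⁆ ∈ uMinus
  lie_uPlus_uMinus : ∀ x ∈ uPlus, ∀ y ∈ uMinus, ⁅x, y⁆ ∈ ell

def IsWeightMap (uPlus ell uMinus : Submodule K g) (φ : K → g →ₗ[K] g) : Prop :=
  ∀ (lam : K), ∀ a ∈ uPlus, ∀ b ∈ ell, ∀ c ∈ uMinus,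
    φ lam (a + b + c) = a + lam • b + lam ^ 2 • c

namespace IsWeightMap

variable {uPlus ell uMinus : Submodule K g} {φ : K → g →ₗ[K] g}

lemma apply_of_mem_uPlus (hφ : IsWeightMap uPlus ell uMinus φ) (μ : K) {a : g}
    (ha : a ∈ uPlus) : φ μ a = a := by
  simpa using hφ μ a ha 0 ell.zero_mem 0 uMinus.zero_mem

lemma apply_of_mem_ell (hφ : IsWeightMap uPlus ell uMinus φ) (μ : K) {b : g}
    (hb : b ∈ ell) : φ μ b = μ • b := by
  simpa using hφ μ 0 uPlus.zero_mem b hb 0 uMinus.zero_mem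

lemma apply_of_mem_uMinus (hφ : IsWeightMap uPlus ell uMinus φ) (μ : K) {c : g}
    (hc : c ∈ uMinus) : φ μ c = μ ^ 2 • c := by
  simpa using hφ μ 0 uPlus.zero_mem 0 ell.zero_mem c hc

lemma comp_apply (hφ : IsWeightMap uPlus ell uMinus φ)
    (hspan : ∀ x : g, ∃ a ∈ uPlus, ∃ b ∈ ell, ∃ c ∈ uMinus, a + b + c = x) (μ ν : K) (z : g) :
    φ μ (φ ν z) = φ (μ * ν) z := by
  obtain ⟨a, ha, b, hb, c, hc, rfl⟩ := hspan z
  rw [hφ ν a ha b hb c hc, hφ μ a ha (ν • b) (ell.smul_mem _ hb) (ν ^ 2 • c)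
    (uMinus.smul_mem _ hc), hφ (μ * ν) a ha b hb c hc]
  match_scalars <;> ring

lemma one_apply (hφ : IsWeightMap uPlus ell uMinus φ)
    (hspan : ∀ x : g, ∃ a ∈ uPlus, ∃ b ∈ ell, ∃ c ∈ uMinus, a + b + c = x) (z : g) :
    φ 1 z = z := by
  obtain ⟨a, ha, b, hb, c, hc, rfl⟩ := hspan z
  rw [hφ 1 a ha b hb c hc, one_smul, one_pow, one_smul]

lemma lie_apply (hφ : IsWeightMap uPlus ell uMinus φ)
    (hspan : ∀ x : g, ∃ a ∈ uPlus, ∃ b ∈ ell, ∃ c ∈ uMinus, a + b + c = x)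
    (hgr : IsShortGrading uPlus ell uMinus) (μ : K) (p q : g) :
    ⁅φ μ p, φ μ q⁆ = μ • φ μ ⁅p, q⁆ := by
  obtain ⟨a, ha, b, hb, c, hc, rfl⟩ := hspan p
  obtain ⟨a', ha', b', hb', c', hc', rfl⟩ := hspan q
  have swap {U V W : Submodule K g} (h : ∀ x ∈ V, ∀ y ∈ W, ⁅x, y⁆ ∈ U) {x y : g} (hx : x ∈ V)
      (hy : y ∈ W) : ⁅y, x⁆ ∈ U := by
    rw [← lie_skew]; exact neg_mem (h x hx y hy)
  rw [hφ μ a ha b hb c hc, hφ μ a' ha' b' hb' c' hc']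
  simp only [lie_add, add_lie, smul_lie, lie_smul, smul_add, map_add,
    hgr.lie_uPlus_uPlus a ha a' ha', hgr.lie_uMinus_uMinus c hc c' hc', smul_zero, map_zero,
    hφ.apply_of_mem_uPlus μ (swap hgr.lie_ell_uPlus hb' ha),
    hφ.apply_of_mem_uPlus μ (hgr.lie_ell_uPlus b hb a' ha'),
    hφ.apply_of_mem_ell μ (hgr.lie_uPlus_uMinus a ha c' hc'),
    hφ.apply_of_mem_ell μ (hgr.lie_ell_ell b hb b' hb'),
    hφ.apply_of_mem_ell μ (swap hgr.lie_uPlus_uMinus ha' hc),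
    hφ.apply_of_mem_uMinus μ (hgr.lie_ell_uMinus b hb c' hc'),
    hφ.apply_of_mem_uMinus μ (swap hgr.lie_ell_uMinus hb' hc)]
  match_scalars <;> ring

def lieEquiv (hφ : IsWeightMap uPlus ell uMinus φ)
    (hspan : ∀ x : g, ∃ a ∈ uPlus, ∃ b ∈ ell, ∃ c ∈ uMinus, a + b + c = x)
    (hgr : IsShortGrading uPlus ell uMinus) {μ : K} (hμ : μ ≠ 0) : g ≃ₗ⁅K⁆ g where
  __ := μ⁻¹ • φ μ
  map_lie' {p q} := by
    change μ⁻¹ • φ μ ⁅p, q⁆ = ⁅μ⁻¹ • φ μ p, μ⁻¹ • φ μ q⁆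
    rw [smul_lie, lie_smul, hφ.lie_apply hspan hgr, smul_smul, smul_smul, mul_assoc,
      inv_mul_cancel₀ hμ, mul_one]
  invFun := μ • φ μ⁻¹
  left_inv z := by simp [hφ.comp_apply hspan, smul_smul, hμ, hφ.one_apply hspan]
  right_inv z := by simp [hφ.comp_apply hspan, smul_smul, hμ, hφ.one_apply hspan]

lemma smul_lieEquiv_apply (hφ : IsWeightMap uPlus ell uMinus φ)
    (hspan : ∀ x : g, ∃ a ∈ uPlus, ∃ b ∈ ell, ∃ c ∈ uMinus, a + b + c = x)
    (hgr : IsShortGrading uPlus ell uMinus) {μ : K} (hμ : μ ≠ 0) (z : g) :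
    μ • hφ.lieEquiv hspan hgr hμ z = φ μ z :=
  smul_inv_smul₀ hμ (φ μ z)

lemma killingForm_apply_lie (hφ : IsWeightMap uPlus ell uMinus φ)
    (hspan : ∀ x : g, ∃ a ∈ uPlus, ∃ b ∈ ell, ∃ c ∈ uMinus, a + b + c = x)
    (hgr : IsShortGrading uPlus ell uMinus) {μ : K} (hμ : μ ≠ 0) (v x y : g) :
    killingForm K g (φ μ v) ⁅φ μ x, φ μ y⁆ = μ ^ 3 * killingForm K g v ⁅x, y⁆ := by
  simp only [← hφ.smul_lieEquiv_apply hspan hgr hμ, lie_smul, smul_lie, ← LieEquiv.map_lie,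
    map_smul, LinearMap.smul_apply, smul_eq_mul, LieAlgebra.killingForm_of_equiv_apply]
  ring

end IsWeightMap

end

theorem stmt_2_general (K : Type*) [Field K]
    (g : Type*) [LieRing g] [LieAlgebra K g]
    (uPlus ell uMinus : Submodule K g)
    (hdec : ∀ x : g, ∃! t : uPlus × ell × uMinus, x = ↑t.1 + ↑t.2.1 + ↑t.2.2)
    (hPP : ∀ x ∈ uPlus, ∀ y ∈ uPlus, ⁅x, y⁆ = (0 : g))
    (hMM : ∀ x ∈ uMinus, ∀ y ∈ uMinus, ⁅x, y⁆ = (0 : g))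
    (hll : ∀ x ∈ ell, ∀ y ∈ ell, ⁅x, y⁆ ∈ ell)
    (hlP : ∀ x ∈ ell, ∀ y ∈ uPlus, ⁅x, y⁆ ∈ uPlus)
    (hlM : ∀ x ∈ ell, ∀ y ∈ uMinus, ⁅x, y⁆ ∈ uMinus)
    (hPM : ∀ x ∈ uPlus, ∀ y ∈ uMinus, ⁅x, y⁆ ∈ ell)
    (φ : K → g →ₗ[K] g)
    (hφ : ∀ (lam : K), ∀ a ∈ uPlus, ∀ b ∈ ell, ∀ c ∈ uMinus,
      φ lam (a + b + c) = a + lam • b + lam ^ 2 • c) :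
    ∀ lam : K, lam ≠ 0 → ∀ v x y : g,
      killingForm K g (φ lam v) ⁅φ lam x, φ lam y⁆ = lam ^ 3 * killingForm K g v ⁅x, y⁆ := by
  have hspan (x : g) : ∃ a ∈ uPlus, ∃ b ∈ ell, ∃ c ∈ uMinus, a + b + c = x := by
    obtain ⟨⟨a, b, c⟩, hx, -⟩ := hdec x
    exact ⟨a, a.2, b, b.2, c, c.2, hx.symm⟩
  have hgr : IsShortGrading uPlus ell uMinus := ⟨hPP, hMM, hll, hlP, hlM, hPM⟩
  exact fun lam hlam ↦ IsWeightMap.killingForm_apply_lie hφ hspan hgr hlam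

/-- Lemma 4.2(2): for every nonzero `λ ∈ K` and all `v, x, y ∈ g`,
`κ(φ_λ(v), ⁅φ_λ(x), φ_λ(y)⁆) = λ³ · κ(v, ⁅x, y⁆)` where `κ` is the Killing form. -/
theorem stmt_2 (K : Type*) [Field K] [CharZero K]
    (g : Type*) [LieRing g] [LieAlgebra K g] [Module.Finite K g]
    (uPlus ell uMinus : Submodule K g)
    (hdec : ∀ x : g, ∃! t : uPlus × ell × uMinus, x = ↑t.1 + ↑t.2.1 + ↑t.2.2)
    (hPP : ∀ x ∈ uPlus, ∀ y ∈ uPlus, ⁅x, y⁆ = (0 : g))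
    (hMM : ∀ x ∈ uMinus, ∀ y ∈ uMinus, ⁅x, y⁆ = (0 : g))
    (hll : ∀ x ∈ ell, ∀ y ∈ ell, ⁅x, y⁆ ∈ ell)
    (hlP : ∀ x ∈ ell, ∀ y ∈ uPlus, ⁅x, y⁆ ∈ uPlus)
    (hlM : ∀ x ∈ ell, ∀ y ∈ uMinus, ⁅x, y⁆ ∈ uMinus)
    (hPM : ∀ x ∈ uPlus, ∀ y ∈ uMinus, ⁅x, y⁆ ∈ ell)
    (φ : K → g →ₗ[K] g)
    (hφ : ∀ (lam : K), ∀ a ∈ uPlus, ∀ b ∈ ell, ∀ c ∈ uMinus,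
      φ lam (a + b + c) = a + lam • b + lam ^ 2 • c) :
    ∀ lam : K, lam ≠ 0 → ∀ v x y : g,
      killingForm K g (φ lam v) ⁅φ lam x, φ lam y⁆ = lam ^ 3 * killingForm K g v ⁅x, y⁆ :=
  stmt_2_general K g uPlus ell uMinus hdec hPP hMM hll hlP hlM hPM φ hφ
end

section
/- For every nonzero λ ∈ K and every x ∈ g that is ad-nilpotent (i.e. the endomorphism ad(x) : g → g, z ↦ ⁅x, z⁆, is nilpotent), the element φ_λ(x) is also ad-nilpotent. -/
/-!
Writing `x = a + b + c` with `a ∈ u⁺`, `b ∈ l`, `c ∈ u⁻`, the map `φ_λ` multiplies the three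
pieces by `λ⁰, λ¹, λ²`, and the bracket relations lower this degree by exactly one, so
`⁅φ_λ u, φ_λ v⁆ = λ • φ_λ ⁅u, v⁆`. Iterating gives `ad(φ_λ x)ⁿ ∘ φ_λ = λⁿ • φ_λ ∘ ad(x)ⁿ`, and
`φ_λ` is invertible for `λ ≠ 0` (its inverse is `φ_{λ⁻¹}`), so `ad(x)ⁿ = 0` forces `ad(φ_λ x)ⁿ = 0`.
-/

namespace LieAlgebra

variable {R L : Type*} [CommRing R] [LieRing L] [LieAlgebra R L]

lemma ad_pow_apply_map_of_lie_map_eq_smul {f : L →ₗ[R] L} {c : R}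
    (hf : ∀ u v, ⁅f u, f v⁆ = c • f ⁅u, v⁆) (x : L) (n : ℕ) (v : L) :
    (ad R L (f x) ^ n) (f v) = c ^ n • f ((ad R L x ^ n) v) := by
  induction n with
  | zero => simp
  | succ n ih =>
    rw [pow_succ', Module.End.mul_apply, ih, map_smul, ad_apply, hf, smul_smul,
      pow_succ' (ad R L x), Module.End.mul_apply, ad_apply, pow_succ]

lemma isNilpotent_ad_map_of_lie_map_eq_smul {f : L →ₗ[R] L} {c : R}
    (hsurj : Function.Surjective f) (hf : ∀ u v, ⁅f u, f v⁆ = c • f ⁅u, v⁆) {x : L}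
    (hx : IsNilpotent (ad R L x)) : IsNilpotent (ad R L (f x)) := by
  obtain ⟨n, hn⟩ := hx
  refine ⟨n, LinearMap.ext fun w => ?_⟩
  obtain ⟨v, rfl⟩ := hsurj w
  simp [ad_pow_apply_map_of_lie_map_eq_smul hf, hn]

end LieAlgebra

lemma Submodule.exists_add_add_eq_of_sup_sup_eq_top {R M : Type*} [Semiring R] [AddCommMonoid M]
    [Module R M] {p q r : Submodule R M} (h : p ⊔ q ⊔ r = ⊤) (x : M) :
    ∃ a ∈ p, ∃ b ∈ q, ∃ c ∈ r, a + b + c = x := by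
  obtain ⟨y, hy, c, hc, rfl⟩ := Submodule.mem_sup.1 (h ▸ Submodule.mem_top : x ∈ p ⊔ q ⊔ r)
  obtain ⟨a, ha, b, hb, rfl⟩ := Submodule.mem_sup.1 hy
  exact ⟨a, ha, b, hb, c, hc, rfl⟩

section ThreeStepGrading

variable {K g : Type*} [Field K] [LieRing g] [LieAlgebra K g]
  {uPlus ell uMinus : Submodule K g} {φ : K → g →ₗ[K] g}

lemma phi_apply_phi_apply (hspan : uPlus ⊔ ell ⊔ uMinus = ⊤)
    (hφ : ∀ (lam : K), ∀ a ∈ uPlus, ∀ b ∈ ell, ∀ c ∈ uMinus,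
      φ lam (a + b + c) = a + lam • b + lam ^ 2 • c) (lam mu : K) (x : g) :
    φ lam (φ mu x) = φ (lam * mu) x := by
  obtain ⟨a, ha, b, hb, c, hc, rfl⟩ := Submodule.exists_add_add_eq_of_sup_sup_eq_top hspan x
  rw [hφ mu a ha b hb c hc, hφ lam a ha _ (ell.smul_mem mu hb) _ (uMinus.smul_mem _ hc),
    hφ (lam * mu) a ha b hb c hc, smul_smul, smul_smul, mul_pow]

lemma phi_surjective (hspan : uPlus ⊔ ell ⊔ uMinus = ⊤)
    (hφ : ∀ (lam : K), ∀ a ∈ uPlus, ∀ b ∈ ell, ∀ c ∈ uMinus,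
      φ lam (a + b + c) = a + lam • b + lam ^ 2 • c) {lam : K} (hlam : lam ≠ 0) :
    Function.Surjective (φ lam) := by
  intro x
  refine ⟨φ lam⁻¹ x, ?_⟩
  obtain ⟨a, ha, b, hb, c, hc, rfl⟩ := Submodule.exists_add_add_eq_of_sup_sup_eq_top hspan x
  rw [phi_apply_phi_apply hspan hφ, mul_inv_cancel₀ hlam, hφ 1 a ha b hb c hc, one_smul,
    one_pow, one_smul]

lemma lie_phi_apply_phi_apply (hspan : uPlus ⊔ ell ⊔ uMinus = ⊤)
    (hPP : ∀ x ∈ uPlus, ∀ y ∈ uPlus, ⁅x, y⁆ = (0 : g))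
    (hMM : ∀ x ∈ uMinus, ∀ y ∈ uMinus, ⁅x, y⁆ = (0 : g))
    (hll : ∀ x ∈ ell, ∀ y ∈ ell, ⁅x, y⁆ ∈ ell)
    (hlP : ∀ x ∈ ell, ∀ y ∈ uPlus, ⁅x, y⁆ ∈ uPlus)
    (hlM : ∀ x ∈ ell, ∀ y ∈ uMinus, ⁅x, y⁆ ∈ uMinus)
    (hPM : ∀ x ∈ uPlus, ∀ y ∈ uMinus, ⁅x, y⁆ ∈ ell)
    (hφ : ∀ (lam : K), ∀ a ∈ uPlus, ∀ b ∈ ell, ∀ c ∈ uMinus,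
      φ lam (a + b + c) = a + lam • b + lam ^ 2 • c) (lam : K) (u v : g) :
    ⁅φ lam u, φ lam v⁆ = lam • φ lam ⁅u, v⁆ := by
  obtain ⟨a, ha, b, hb, c, hc, rfl⟩ := Submodule.exists_add_add_eq_of_sup_sup_eq_top hspan u
  obtain ⟨a', ha', b', hb', c', hc', rfl⟩ := Submodule.exists_add_add_eq_of_sup_sup_eq_top hspan v
  have hPlus : ⁅a, b'⁆ + ⁅b, a'⁆ ∈ uPlus :=
    uPlus.add_mem (lie_skew a b' ▸ uPlus.neg_mem (hlP b' hb' a ha)) (hlP b hb a' ha')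
  have hLevi : ⁅a, c'⁆ + ⁅b, b'⁆ + ⁅c, a'⁆ ∈ ell :=
    ell.add_mem (ell.add_mem (hPM a ha c' hc') (hll b hb b' hb'))
      (lie_skew c a' ▸ ell.neg_mem (hPM a' ha' c hc))
  have hMinus : ⁅b, c'⁆ + ⁅c, b'⁆ ∈ uMinus :=
    uMinus.add_mem (hlM b hb c' hc') (lie_skew c b' ▸ uMinus.neg_mem (hlM b' hb' c hc))
  have hbracket : ⁅a + b + c, a' + b' + c'⁆ =
      (⁅a, b'⁆ + ⁅b, a'⁆) + (⁅a, c'⁆ + ⁅b, b'⁆ + ⁅c, a'⁆) + (⁅b, c'⁆ + ⁅c, b'⁆) := by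
    simp only [add_lie, lie_add, hPP a ha a' ha', hMM c hc c' hc']
    abel
  rw [hφ lam a ha b hb c hc, hφ lam a' ha' b' hb' c' hc', hbracket,
    hφ lam _ hPlus _ hLevi _ hMinus]
  simp only [add_lie, lie_add, smul_lie, lie_smul, hPP a ha a' ha', hMM c hc c' hc',
    smul_add, smul_smul]
  module

end ThreeStepGrading

theorem stmt_4_general (K : Type*) [Field K]
    (g : Type*) [LieRing g] [LieAlgebra K g]
    (uPlus ell uMinus : Submodule K g)
    (hdec : ∀ x : g, ∃! t : uPlus × ell × uMinus, x = ↑t.1 + ↑t.2.1 + ↑t.2.2)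
    (hPP : ∀ x ∈ uPlus, ∀ y ∈ uPlus, ⁅x, y⁆ = (0 : g))
    (hMM : ∀ x ∈ uMinus, ∀ y ∈ uMinus, ⁅x, y⁆ = (0 : g))
    (hll : ∀ x ∈ ell, ∀ y ∈ ell, ⁅x, y⁆ ∈ ell)
    (hlP : ∀ x ∈ ell, ∀ y ∈ uPlus, ⁅x, y⁆ ∈ uPlus)
    (hlM : ∀ x ∈ ell, ∀ y ∈ uMinus, ⁅x, y⁆ ∈ uMinus)
    (hPM : ∀ x ∈ uPlus, ∀ y ∈ uMinus, ⁅x, y⁆ ∈ ell)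
    (φ : K → g →ₗ[K] g)
    (hφ : ∀ (lam : K), ∀ a ∈ uPlus, ∀ b ∈ ell, ∀ c ∈ uMinus,
      φ lam (a + b + c) = a + lam • b + lam ^ 2 • c) :
    ∀ lam : K, lam ≠ 0 → ∀ x : g,
      IsNilpotent (LieAlgebra.ad K g x) → IsNilpotent (LieAlgebra.ad K g (φ lam x)) := by
  intro lam hlam x hx
  have hspan : uPlus ⊔ ell ⊔ uMinus = ⊤ := by
    refine eq_top_iff.2 fun y _ => ?_
    obtain ⟨⟨a, b, c⟩, rfl, -⟩ := hdec y
    exact add_mem (add_mem (Submodule.mem_sup_left (Submodule.mem_sup_left a.2))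
      (Submodule.mem_sup_left (Submodule.mem_sup_right b.2))) (Submodule.mem_sup_right c.2)
  exact LieAlgebra.isNilpotent_ad_map_of_lie_map_eq_smul (phi_surjective hspan hφ hlam)
    (lie_phi_apply_phi_apply hspan hPP hMM hll hlP hlM hPM hφ lam) hx

/-- Lemma 4.2(3): for every nonzero `λ ∈ K`, the map `φ_λ` preserves ad-nilpotent
elements of `g`. -/
theorem stmt_4 (K : Type*) [Field K] [CharZero K]
    (g : Type*) [LieRing g] [LieAlgebra K g]
    (uPlus ell uMinus : Submodule K g)
    (hdec : ∀ x : g, ∃! t : uPlus × ell × uMinus, x = ↑t.1 + ↑t.2.1 + ↑t.2.2)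
    (hPP : ∀ x ∈ uPlus, ∀ y ∈ uPlus, ⁅x, y⁆ = (0 : g))
    (hMM : ∀ x ∈ uMinus, ∀ y ∈ uMinus, ⁅x, y⁆ = (0 : g))
    (hll : ∀ x ∈ ell, ∀ y ∈ ell, ⁅x, y⁆ ∈ ell)
    (hlP : ∀ x ∈ ell, ∀ y ∈ uPlus, ⁅x, y⁆ ∈ uPlus)
    (hlM : ∀ x ∈ ell, ∀ y ∈ uMinus, ⁅x, y⁆ ∈ uMinus)
    (hPM : ∀ x ∈ uPlus, ∀ y ∈ uMinus, ⁅x, y⁆ ∈ ell)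
    (φ : K → g →ₗ[K] g)
    (hφ : ∀ (lam : K), ∀ a ∈ uPlus, ∀ b ∈ ell, ∀ c ∈ uMinus,
      φ lam (a + b + c) = a + lam • b + lam ^ 2 • c) :
    ∀ lam : K, lam ≠ 0 → ∀ x : g,
      IsNilpotent (LieAlgebra.ad K g x) → IsNilpotent (LieAlgebra.ad K g (φ lam x)) :=
  stmt_4_general K g uPlus ell uMinus hdec hPP hMM hll hlP hlM hPM φ hφ
end

section
/- Let K be a field of characteristic zero, V a K-vector space, and ω : V × V → K a K-bilinear form. Suppose that for every nonzero λ ∈ K there is a K-linear map g_λ : V → V such that ω(g_λ(v), g_λ(w)) = λ·ω(v, w) for all v, w ∈ V. Let p, q be natural numbers with p + q ≠ 1, and suppose v, w ∈ V satisfy g_λ(v) = λᵖ·v and g_λ(w) = λ^q·w for every nonzero λ ∈ K. Then ω(v, w) = 0. -/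
theorem LinearMap.apply_apply_eq_zero_of_mul_ne {R M : Type*} [CommRing R] [NoZeroDivisors R]
    [AddCommMonoid M] [Module R M] (ω : M →ₗ[R] M →ₗ[R] R) {f : M → M} {a b c : R} {v w : M}
    (hv : f v = a • v) (hw : f w = b • w) (hω : ω (f v) (f w) = c * ω v w) (habc : a * b ≠ c) :
    ω v w = 0 := by
  rw [hv, hw, map_smul, map_smul, LinearMap.smul_apply, smul_eq_mul, smul_eq_mul] at hω
  have hfactor : (a * b - c) * ω v w = 0 := by linear_combination hω
  exact (mul_eq_zero.mp hfactor).resolve_left (sub_ne_zero.mpr habc)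

/-- Weight-vanishing: if a bilinear form `ω` is rescaled by the factor `λ` under a
family of linear maps `g_λ`, then weight vectors of weights `p` and `q` with
`p + q ≠ 1` pair to zero. -/
theorem stmt_5 (K : Type*) [Field K] [CharZero K]
    (V : Type*) [AddCommGroup V] [Module K V]
    (ω : V →ₗ[K] V →ₗ[K] K)
    (g : K → V →ₗ[K] V)
    (hg : ∀ lam : K, lam ≠ 0 → ∀ v w : V, ω (g lam v) (g lam w) = lam * ω v w)
    (p q : ℕ) (hpq : p + q ≠ 1)
    (v w : V)
    (hv : ∀ lam : K, lam ≠ 0 → g lam v = lam ^ p • v)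
    (hw : ∀ lam : K, lam ≠ 0 → g lam w = lam ^ q • w) :
    ω v w = 0 := by
  refine ω.apply_apply_eq_zero_of_mul_ne (hv 2 two_ne_zero) (hw 2 two_ne_zero)
    (hg 2 two_ne_zero v w) ?_
  rw [← pow_add]
  exact_mod_cast (Nat.pow_right_injective le_rfl).ne hpq
end

section
/- Let K be a field, V a finite-dimensional K-vector space, and ω a nondegenerate K-bilinear form on V. Suppose V decomposes as an internal direct sum V = ⊕_{p ∈ ℤ} V_p of subspaces (all but finitely many zero) such that ω(V_p, V_q) = 0 whenever p + q ≠ 1. If dim V_0 = (1/2)·dim V, then dim V_1 = dim V_0 and V_p = 0 for every p ∉ {0, 1}. -/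
/-!
Left nondegeneracy of `ω` embeds `V_p` into the dual of `V_{1-p}`, so `dim V_p = dim V_{1-p}`.
For `p ∉ {0, 1}` the four weights `0, 1, p, 1 - p` are distinct, hence
`dim V ≥ dim V_0 + dim V_1 + dim V_p + dim V_{1-p} = dim V + 2 dim V_p`.
-/

open Module

theorem LinearMap.SeparatingLeft.finrank_le {K M N : Type*} [Field K] [AddCommGroup M]
    [Module K M] [AddCommGroup N] [Module K N] [FiniteDimensional K N]
    {B : M →ₗ[K] N →ₗ[K] K} (hB : B.SeparatingLeft) : finrank K M ≤ finrank K N :=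
  calc finrank K M ≤ finrank K (Dual K N) :=
        LinearMap.finrank_le_finrank_of_injective <|
          LinearMap.ker_eq_bot.mp <| LinearMap.separatingLeft_iff_ker_eq_bot.mp hB
    _ = finrank K N := Subspace.dual_finrank_eq

theorem iSupIndep.finrank_biSup {K M ι : Type*} [DivisionRing K] [AddCommGroup M] [Module K M]
    [FiniteDimensional K M] {V : ι → Submodule K M} (hV : iSupIndep V) (s : Finset ι) :
    finrank K ↥(⨆ i ∈ s, V i) = ∑ i ∈ s, finrank K (V i) := by
  classical
  induction s using Finset.induction_on with
  | empty => simp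
  | insert a s ha ih =>
    have hdisj : Disjoint (V a) (⨆ i ∈ s, V i) := hV.disjoint_biSup (by simpa using ha)
    rw [Finset.sum_insert ha, ← ih, Finset.iSup_insert,
      ← Submodule.finrank_sup_add_finrank_inf_eq, hdisj.eq_bot, finrank_bot, add_zero]

theorem iSupIndep.sum_finrank_le {K M ι : Type*} [DivisionRing K] [AddCommGroup M] [Module K M]
    [FiniteDimensional K M] {V : ι → Submodule K M} (hV : iSupIndep V) (s : Finset ι) :
    ∑ i ∈ s, finrank K (V i) ≤ finrank K M :=
  hV.finrank_biSup s ▸ Submodule.finrank_le _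

section WeightPairing

variable {K V ι : Type*} [Field K] [AddCommGroup V] [Module K V] [AddCommGroup ι]
  {Vp : ι → Submodule K V} {ω : V →ₗ[K] V →ₗ[K] K} {c : ι}

theorem separatingLeft_domRestrict₁₂_weight_sub (hspan : ⨆ i, Vp i = ⊤)
    (hω : ω.SeparatingLeft)
    (horth : ∀ p q : ι, p + q ≠ c → ∀ v ∈ Vp p, ∀ w ∈ Vp q, ω v w = 0) (p : ι) :
    (ω.domRestrict₁₂ (Vp p) (Vp (c - p))).SeparatingLeft := by
  rintro ⟨v, hv⟩ hvanish
  have hker : ⨆ q, Vp q ≤ LinearMap.ker (ω v) := iSup_le fun q w hw => by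
    obtain rfl | hpq := eq_or_ne q (c - p)
    · exact hvanish ⟨w, hw⟩
    · exact horth p q (fun h => hpq (eq_sub_of_add_eq' h)) v hv w hw
  have hωv : ω v = 0 := LinearMap.ker_eq_top.mp (top_le_iff.mp (hspan ▸ hker))
  exact Subtype.ext <| hω v fun w => by rw [hωv, LinearMap.zero_apply]

theorem finrank_weight_eq_finrank_weight_sub [FiniteDimensional K V]
    (hspan : ⨆ i, Vp i = ⊤) (hω : ω.SeparatingLeft)
    (horth : ∀ p q : ι, p + q ≠ c → ∀ v ∈ Vp p, ∀ w ∈ Vp q, ω v w = 0) (p : ι) :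
    finrank K (Vp p) = finrank K (Vp (c - p)) := by
  have h := (separatingLeft_domRestrict₁₂_weight_sub hspan hω horth (c - p)).finrank_le
  rw [sub_sub_cancel] at h
  exact le_antisymm (separatingLeft_domRestrict₁₂_weight_sub hspan hω horth p).finrank_le h

end WeightPairing

theorem stmt_6_general (K : Type*) [Field K]
    (V : Type*) [AddCommGroup V] [Module K V] [FiniteDimensional K V]
    (Vp : ℤ → Submodule K V)
    (hint : DirectSum.IsInternal Vp)
    (ω : V →ₗ[K] V →ₗ[K] K)
    (hnd₁ : ∀ v : V, (∀ w : V, ω v w = 0) → v = 0)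
    (horth : ∀ p q : ℤ, p + q ≠ 1 → ∀ v ∈ Vp p, ∀ w ∈ Vp q, ω v w = 0)
    (hdim : 2 * Module.finrank K (Vp 0) = Module.finrank K V) :
    Module.finrank K (Vp 1) = Module.finrank K (Vp 0) ∧
      ∀ p : ℤ, p ≠ 0 → p ≠ 1 → Vp p = ⊥ := by
  have hpair := finrank_weight_eq_finrank_weight_sub hint.submodule_iSup_eq_top hnd₁ horth
  have h10 : finrank K (Vp 1) = finrank K (Vp 0) := by simpa using (hpair 0).symm
  refine ⟨h10, fun p hp0 hp1 => Submodule.finrank_eq_zero.mp ?_⟩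
  have hsum := hint.submodule_iSupIndep.sum_finrank_le {0, 1, p, 1 - p}
  rw [Finset.sum_insert (by simp only [Finset.mem_insert, Finset.mem_singleton]; omega),
    Finset.sum_insert (by simp only [Finset.mem_insert, Finset.mem_singleton]; omega),
    Finset.sum_pair (by omega), ← hpair p] at hsum
  omega

/-- Weight decomposition step in Theorem 4.3: for a nondegenerate bilinear form on a
finite-dimensional space decomposed into weight spaces pairing to zero unless the
weights add to `1`, if `dim V₀ = ½ dim V` then `dim V₁ = dim V₀` and all other weight
spaces vanish. -/
theorem stmt_6 (K : Type*) [Field K]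
    (V : Type*) [AddCommGroup V] [Module K V] [FiniteDimensional K V]
    (Vp : ℤ → Submodule K V)
    (hint : DirectSum.IsInternal Vp)
    (hfin : {p : ℤ | Vp p ≠ ⊥}.Finite)
    (ω : V →ₗ[K] V →ₗ[K] K)
    (hnd₁ : ∀ v : V, (∀ w : V, ω v w = 0) → v = 0)
    (hnd₂ : ∀ w : V, (∀ v : V, ω v w = 0) → w = 0)
    (horth : ∀ p q : ℤ, p + q ≠ 1 → ∀ v ∈ Vp p, ∀ w ∈ Vp q, ω v w = 0)
    (hdim : 2 * Module.finrank K (Vp 0) = Module.finrank K V) :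
    Module.finrank K (Vp 1) = Module.finrank K (Vp 0) ∧
      ∀ p : ℤ, p ≠ 0 → p ≠ 1 → Vp p = ⊥ :=
  stmt_6_general K V Vp hint ω hnd₁ horth hdim
end
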